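/- With the setup of the previous context (X₁,X₂,X₃ independent, S = h(X₂,X₃), S' a noisy version of S conditionally independent of the X's given S, Y = f(X₁,S') with f injective in each argument), one has H(Y | X₁, X₂, X₃) = H(S' | S) and H(S' | S, X₂, X₃) = H(S' | S). -/
import Mathlib


open scoped Classical
open Finset

noncomputable section

/-- Probability that a random variable `X` takes value `x`, under pmf `p` on `Ω`. -/
def dist' {Ω 𝒳 : Type*} [Fintype Ω] (p : Ω → ℝ) (X : Ω → 𝒳) (x : 𝒳) : ℝ :=
  ∑ ω, if X ω = x then p ω else 0

/-- Shannon entropy of `X`. -/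
def ent {Ω 𝒳 : Type*} [Fintype Ω] [Fintype 𝒳] (p : Ω → ℝ) (X : Ω → 𝒳) : ℝ :=
  -∑ x, dist' p X x * Real.log (dist' p X x)

/-- Conditional entropy `H(X | Y)`. -/
def condEnt {Ω 𝒳 𝒴 : Type*} [Fintype Ω] [Fintype 𝒳] [Fintype 𝒴]
    (p : Ω → ℝ) (X : Ω → 𝒳) (Y : Ω → 𝒴) : ℝ :=
  ent p (fun ω => (X ω, Y ω)) - ent p Y

/-- Mutual information `I(X; Y)`. -/
def mi {Ω 𝒳 𝒴 : Type*} [Fintype Ω] [Fintype 𝒳] [Fintype 𝒴]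
    (p : Ω → ℝ) (X : Ω → 𝒳) (Y : Ω → 𝒴) : ℝ :=
  ent p X + ent p Y - ent p (fun ω => (X ω, Y ω))

/-- Conditional mutual information `I(X; Y | Z)`. -/
def cmi {Ω 𝒳 𝒴 𝒵 : Type*} [Fintype Ω] [Fintype 𝒳] [Fintype 𝒴] [Fintype 𝒵]
    (p : Ω → ℝ) (X : Ω → 𝒳) (Y : Ω → 𝒴) (Z : Ω → 𝒵) : ℝ :=
  condEnt p X Z + condEnt p Y Z - condEnt p (fun ω => (X ω, Y ω)) Z

/-- `p` is a probability mass function. -/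
def IsPMF {Ω : Type*} [Fintype Ω] (p : Ω → ℝ) : Prop :=
  (∀ ω, 0 ≤ p ω) ∧ ∑ ω, p ω = 1

/-- Independence of two random variables. -/
def IndepRV {Ω 𝒳 𝒴 : Type*} [Fintype Ω] (p : Ω → ℝ) (X : Ω → 𝒳) (Y : Ω → 𝒴) : Prop :=
  ∀ x y, dist' p (fun ω => (X ω, Y ω)) (x, y) = dist' p X x * dist' p Y y

/-- Conditional independence of `X` and `Y` given `Z`. -/
def CondIndepRV {Ω 𝒳 𝒴 𝒵 : Type*} [Fintype Ω] (p : Ω → ℝ)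
    (X : Ω → 𝒳) (Y : Ω → 𝒴) (Z : Ω → 𝒵) : Prop :=
  ∀ x y z, dist' p (fun ω => (X ω, Y ω, Z ω)) (x, y, z) * dist' p Z z
    = dist' p (fun ω => (X ω, Z ω)) (x, z) * dist' p (fun ω => (Y ω, Z ω)) (y, z)

/-- Mutual independence of three random variables. -/
def MutIndep3 {Ω 𝒳 𝒴 𝒵 : Type*} [Fintype Ω] (p : Ω → ℝ)
    (X : Ω → 𝒳) (Y : Ω → 𝒴) (Z : Ω → 𝒵) : Prop :=
  ∀ x y z, dist' p (fun ω => (X ω, Y ω, Z ω)) (x, y, z)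
    = dist' p X x * dist' p Y y * dist' p Z z

/-- `f` is injective in each of its two arguments. -/
def InjEach {𝒳 𝒮 𝒴 : Type*} (f : 𝒳 → 𝒮 → 𝒴) : Prop :=
  (∀ s, Function.Injective fun x => f x s) ∧ ∀ x, Function.Injective (f x)

/-- Conditional pmf `p(x | y)` induced by the joint law of `(X, Y)`. -/
def cdist {Ω 𝒳 𝒴 : Type*} [Fintype Ω] (p : Ω → ℝ) (X : Ω → 𝒳) (Y : Ω → 𝒴)
    (x : 𝒳) (y : 𝒴) : ℝ :=
  dist' p (fun ω => (X ω, Y ω)) (x, y) / dist' p Y y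

/-- Robust (ε-) typicality of a sequence `z` with respect to a pmf `q`. -/
def Typ {𝒵 : Type*} [Fintype 𝒵] (q : 𝒵 → ℝ) (ε : ℝ) {n : ℕ} (z : Fin n → 𝒵) : Prop :=
  ∀ a, |((univ.filter fun i => z i = a).card : ℝ) / n - q a| ≤ ε * q a

end


noncomputable section AuxLemmas

variable {Ω 𝒳 𝒴 𝒲 𝒮 𝒮' : Type*} [Fintype Ω]

lemma dist'_nonneg (p : Ω → ℝ) (hp : ∀ ω, 0 ≤ p ω) (X : Ω → 𝒳) (x : 𝒳) :
    0 ≤ dist' p X x := by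
  apply Finset.sum_nonneg; intro ω _; split <;> simp [hp ω]

lemma dist'_congr (p : Ω → ℝ) (F : Ω → 𝒳) (G : Ω → 𝒴) (v : 𝒳) (u : 𝒴)
    (h : ∀ ω, F ω = v ↔ G ω = u) : dist' p F v = dist' p G u := by
  unfold dist'; apply Finset.sum_congr rfl; intro ω _; simp [h ω]

lemma dist'_mono (p : Ω → ℝ) (hp : ∀ ω, 0 ≤ p ω) (F : Ω → 𝒳) (G : Ω → 𝒴) (v : 𝒳) (u : 𝒴)
    (h : ∀ ω, F ω = v → G ω = u) : dist' p F v ≤ dist' p G u := by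
  apply Finset.sum_le_sum; intro ω _
  by_cases hF : F ω = v
  · simp [hF, h ω hF]
  · simp only [hF, if_false]; split <;> [exact hp ω; exact le_refl 0]

lemma sum_dist'_pair [Fintype 𝒳] (p : Ω → ℝ) (A : Ω → 𝒳) (B : Ω → 𝒴) (b : 𝒴) :
    ∑ a, dist' p (fun ω => (A ω, B ω)) (a, b) = dist' p B b := by
  unfold dist'
  rw [Finset.sum_comm]
  apply Finset.sum_congr rfl; intro ω _
  simp [Prod.ext_iff, ite_and]

lemma ent_comp_inj [Fintype 𝒳] [Fintype 𝒴] (p : Ω → ℝ) (X : Ω → 𝒳)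
    (e : 𝒳 → 𝒴) (he : Function.Injective e) :
    ent p (fun ω => e (X ω)) = ent p X := by
  unfold ent
  congr 1
  have h1 : ∑ y : 𝒴, dist' p (fun ω => e (X ω)) y * Real.log (dist' p (fun ω => e (X ω)) y)
      = ∑ y ∈ univ.image e, dist' p (fun ω => e (X ω)) y *
          Real.log (dist' p (fun ω => e (X ω)) y) := by
    apply (Finset.sum_subset (Finset.subset_univ _) _).symm
    intro y _ hy
    have : dist' p (fun ω => e (X ω)) y = 0 := by
      unfold dist'
      apply Finset.sum_eq_zero; intro ω _
      have : e (X ω) ≠ y := fun h => hy (Finset.mem_image.2 ⟨X ω, mem_univ _, h⟩)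
      simp [this]
    simp [this]
  rw [h1, Finset.sum_image (fun x _ y _ h => he h)]
  apply Finset.sum_congr rfl; intro x _
  have : dist' p (fun ω => e (X ω)) (e x) = dist' p X x :=
    dist'_congr _ _ _ _ _ (fun ω => by simp [he.eq_iff])
  rw [this]

lemma condEnt_eq' [Fintype 𝒳] [Fintype 𝒴] (p : Ω → ℝ) (X : Ω → 𝒳) (Y : Ω → 𝒴) :
    condEnt p X Y = -∑ x, ∑ y,
      dist' p (fun ω => (X ω, Y ω)) (x, y) *
        (Real.log (dist' p (fun ω => (X ω, Y ω)) (x, y)) - Real.log (dist' p Y y)) := by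
  unfold condEnt ent
  rw [Fintype.sum_prod_type]
  have hm : ∀ y, dist' p Y y * Real.log (dist' p Y y)
      = ∑ x, dist' p (fun ω => (X ω, Y ω)) (x, y) * Real.log (dist' p Y y) := by
    intro y
    rw [← Finset.sum_mul, sum_dist'_pair]
  simp only [hm, mul_sub]
  rw [Finset.sum_comm (s := univ) (t := univ)
    (f := fun y x => dist' p (fun ω => (X ω, Y ω)) (x, y) * Real.log (dist' p Y y))]
  simp only [Finset.sum_sub_distrib]
  ring

lemma dist'_fiber_sum [Fintype 𝒲] (p : Ω → ℝ) (W : Ω → 𝒲) (g : 𝒲 → 𝒮) (S' : Ω → 𝒮')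
    (s' : 𝒮') (s : 𝒮) :
    ∑ w ∈ univ.filter (fun w => g w = s), dist' p (fun ω => (S' ω, W ω)) (s', w)
      = dist' p (fun ω => (S' ω, g (W ω))) (s', s) := by
  rw [Finset.sum_filter]
  unfold dist'
  beta_reduce
  trans (∑ w : 𝒲, ∑ ω, (if g w = s then (if (S' ω, W ω) = (s', w) then p ω else 0) else 0))
  · exact Finset.sum_congr rfl fun w _ => by split <;> simp
  rw [Finset.sum_comm]
  apply Finset.sum_congr rfl; intro ω _
  rw [Finset.sum_eq_single (W ω)]
  · by_cases h1 : g (W ω) = s <;> by_cases h2 : S' ω = s' <;>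
      simp [Prod.ext_iff, h1, h2]
  · intro w _ hw
    have : W ω ≠ w := Ne.symm hw
    simp [Prod.ext_iff, this]
  · simp

lemma condEnt_markov [Fintype 𝒲] [Fintype 𝒮] [Fintype 𝒮'] (p : Ω → ℝ)
    (hp : ∀ ω, 0 ≤ p ω) (W : Ω → 𝒲) (g : 𝒲 → 𝒮) (S' : Ω → 𝒮')
    (hci : CondIndepRV p W S' (fun ω => g (W ω))) :
    condEnt p S' W = condEnt p S' (fun ω => g (W ω)) := by
  rw [condEnt_eq' p S' W, condEnt_eq' p S' (fun ω => g (W ω))]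
  congr 1
  apply Finset.sum_congr rfl; intro s' _
  set j : 𝒲 → ℝ := fun w => dist' p (fun ω => (S' ω, W ω)) (s', w) with hj
  set r : 𝒮 → ℝ := fun s => dist' p (fun ω => (S' ω, g (W ω))) (s', s) with hr
  set q : 𝒲 → ℝ := fun w => dist' p W w with hq
  set pS : 𝒮 → ℝ := fun s => dist' p (fun ω => g (W ω)) s with hpS
  have key : ∀ w, j w * (Real.log (j w) - Real.log (q w))
      = j w * (Real.log (r (g w)) - Real.log (pS (g w))) := by
    intro w
    by_cases h0 : j w = 0
    · simp [h0]
    have hj0 : 0 < j w := lt_of_le_of_ne (dist'_nonneg p hp _ _) (Ne.symm h0)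
    have hqw : 0 < q w := lt_of_lt_of_le hj0 <| dist'_mono p hp _ _ _ _
      (fun ω hF => congrArg Prod.snd hF)
    have hrw : 0 < r (g w) := lt_of_lt_of_le hj0 <| dist'_mono p hp _ _ _ _
      (fun ω hF => by
        obtain ⟨h1, h2⟩ := Prod.mk.injEq .. ▸ hF
        exact Prod.ext h1 (by rw [h2]))
    have hpSw : 0 < pS (g w) := lt_of_lt_of_le hqw <| dist'_mono p hp _ _ _ _
      (fun ω hF => by rw [hF])
    have hprod : j w * pS (g w) = q w * r (g w) := by
      have h1 : dist' p (fun ω => (W ω, S' ω, g (W ω))) (w, s', g w) = j w := by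
        apply dist'_congr
        intro ω
        simp only [Prod.ext_iff]
        constructor
        · rintro ⟨a, b, c⟩; exact ⟨b, a⟩
        · rintro ⟨b, a⟩; exact ⟨a, b, by rw [a]⟩
      have h2 : dist' p (fun ω => (W ω, g (W ω))) (w, g w) = q w := by
        apply dist'_congr
        intro ω
        simp only [Prod.ext_iff]
        constructor
        · rintro ⟨a, _⟩; exact a
        · intro a; exact ⟨a, by rw [a]⟩
      have := hci w s' (g w)
      rw [h1, h2] at this
      exact this
    have hlog : Real.log (j w) - Real.log (q w)
        = Real.log (r (g w)) - Real.log (pS (g w)) := by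
      have := congrArg Real.log hprod
      rw [Real.log_mul hj0.ne' hpSw.ne', Real.log_mul hqw.ne' hrw.ne'] at this
      linarith
    rw [hlog]
  calc ∑ w, j w * (Real.log (j w) - Real.log (q w))
      = ∑ w, j w * (Real.log (r (g w)) - Real.log (pS (g w))) := by
        exact Finset.sum_congr rfl fun w _ => key w
    _ = ∑ s, ∑ w ∈ univ.filter (fun w => g w = s),
          j w * (Real.log (r (g w)) - Real.log (pS (g w))) := by
        rw [Finset.sum_fiberwise (g := g)]
    _ = ∑ s, r s * (Real.log (r s) - Real.log (pS s)) := by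
        apply Finset.sum_congr rfl; intro s _
        have : ∀ w ∈ univ.filter (fun w => g w = s),
            j w * (Real.log (r (g w)) - Real.log (pS (g w)))
              = j w * (Real.log (r s) - Real.log (pS s)) := by
          intro w hw
          rw [(Finset.mem_filter.1 hw).2]
        rw [Finset.sum_congr rfl this, ← Finset.sum_mul, dist'_fiber_sum]

end AuxLemmas

/-- Same setup as statement 3:
`H(Y | X₁,X₂,X₃) = H(S'|S)` and `H(S' | S,X₂,X₃) = H(S'|S)`. -/
theorem stmt4 {Ω 𝒳₁ 𝒳₂ 𝒳₃ 𝒮 𝒮' 𝒴 : Type*} [Fintype Ω] [Fintype 𝒳₁] [Fintype 𝒳₂]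
    [Fintype 𝒳₃] [Fintype 𝒮] [Fintype 𝒮'] [Fintype 𝒴]
    (p : Ω → ℝ) (hp : IsPMF p) (X₁ : Ω → 𝒳₁) (X₂ : Ω → 𝒳₂) (X₃ : Ω → 𝒳₃)
    (h : 𝒳₂ → 𝒳₃ → 𝒮) (S' : Ω → 𝒮') (f : 𝒳₁ → 𝒮' → 𝒴)
    (hind : MutIndep3 p X₁ X₂ X₃)
    (hMarkov : CondIndepRV p (fun ω => (X₁ ω, X₂ ω, X₃ ω)) S'
      (fun ω => h (X₂ ω) (X₃ ω)))
    (hf : InjEach f) :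
    condEnt p (fun ω => f (X₁ ω) (S' ω)) (fun ω => (X₁ ω, X₂ ω, X₃ ω))
      = condEnt p S' (fun ω => h (X₂ ω) (X₃ ω)) ∧
    condEnt p S' (fun ω => (h (X₂ ω) (X₃ ω), X₂ ω, X₃ ω))
      = condEnt p S' (fun ω => h (X₂ ω) (X₃ ω)) := by
  have hp0 := hp.1
  constructor
  · -- H(Y | X₁,X₂,X₃) = H(S' | S)
    have he : Function.Injective
        (fun q : 𝒮' × (𝒳₁ × 𝒳₂ × 𝒳₃) => (f q.2.1 q.1, q.2)) := by
      intro a b hab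
      simp only [Prod.ext_iff] at hab ⊢
      obtain ⟨h1, h2⟩ := hab
      refine ⟨?_, h2⟩
      rw [← h2.1] at h1
      exact hf.2 a.2.1 h1
    have step1 : condEnt p (fun ω => f (X₁ ω) (S' ω)) (fun ω => (X₁ ω, X₂ ω, X₃ ω))
        = condEnt p S' (fun ω => (X₁ ω, X₂ ω, X₃ ω)) := by
      unfold condEnt
      congr 1
      exact ent_comp_inj p (fun ω => (S' ω, (X₁ ω, X₂ ω, X₃ ω))) _ he
    rw [step1]
    exact condEnt_markov p hp0 (fun ω => (X₁ ω, X₂ ω, X₃ ω))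
      (fun w => h w.2.1 w.2.2) S' hMarkov
  · -- H(S' | S,X₂,X₃) = H(S' | S)
    have hci2 : CondIndepRV p (fun ω => (X₂ ω, X₃ ω)) S'
        (fun ω => h (X₂ ω) (X₃ ω)) := by
      rintro ⟨x₂, x₃⟩ s' s
      have hL : dist' p (fun ω => ((X₂ ω, X₃ ω), S' ω, h (X₂ ω) (X₃ ω))) ((x₂, x₃), s', s)
          = ∑ x₁, dist' p (fun ω => ((X₁ ω, X₂ ω, X₃ ω), S' ω, h (X₂ ω) (X₃ ω)))
              ((x₁, x₂, x₃), s', s) := by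
        rw [← sum_dist'_pair p X₁
          (fun ω => ((X₂ ω, X₃ ω), S' ω, h (X₂ ω) (X₃ ω))) ((x₂, x₃), s', s)]
        apply Finset.sum_congr rfl; intro x₁ _
        apply dist'_congr
        intro ω
        simp only [Prod.ext_iff]
        tauto
      have hL2 : dist' p (fun ω => ((X₂ ω, X₃ ω), h (X₂ ω) (X₃ ω))) ((x₂, x₃), s)
          = ∑ x₁, dist' p (fun ω => ((X₁ ω, X₂ ω, X₃ ω), h (X₂ ω) (X₃ ω)))
              ((x₁, x₂, x₃), s) := by
        rw [← sum_dist'_pair p X₁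
          (fun ω => ((X₂ ω, X₃ ω), h (X₂ ω) (X₃ ω))) ((x₂, x₃), s)]
        apply Finset.sum_congr rfl; intro x₁ _
        apply dist'_congr
        intro ω
        simp only [Prod.ext_iff]
        tauto
      rw [hL, hL2, Finset.sum_mul, Finset.sum_mul]
      exact Finset.sum_congr rfl fun x₁ _ => hMarkov (x₁, x₂, x₃) s' s
    have he2 : Function.Injective
        (fun q : 𝒳₂ × 𝒳₃ => (h q.1 q.2, q.1, q.2)) := by
      intro a b hab
      simp only [Prod.ext_iff] at hab ⊢
      exact hab.2
    have he3 : Function.Injective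
        (fun q : 𝒮' × (𝒳₂ × 𝒳₃) => (q.1, h q.2.1 q.2.2, q.2.1, q.2.2)) := by
      intro a b hab
      simp only [Prod.ext_iff] at hab ⊢
      exact ⟨hab.1, hab.2.2⟩
    have step2 : condEnt p S' (fun ω => (h (X₂ ω) (X₃ ω), X₂ ω, X₃ ω))
        = condEnt p S' (fun ω => (X₂ ω, X₃ ω)) := by
      unfold condEnt
      have e1 : ent p (fun ω => (S' ω, (h (X₂ ω) (X₃ ω), X₂ ω, X₃ ω)))
          = ent p (fun ω => (S' ω, (X₂ ω, X₃ ω))) :=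
        ent_comp_inj p (fun ω => (S' ω, (X₂ ω, X₃ ω))) _ he3
      have e2 : ent p (fun ω => (h (X₂ ω) (X₃ ω), X₂ ω, X₃ ω))
          = ent p (fun ω => (X₂ ω, X₃ ω)) :=
        ent_comp_inj p (fun ω => (X₂ ω, X₃ ω)) _ he2
      rw [e1, e2]
    rw [step2]
    exact condEnt_markov p hp0 (fun ω => (X₂ ω, X₃ ω))
      (fun w => h w.1 w.2) S' hci2
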